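/- arXiv:2407.02169 — 3 statements merged into one kernel-verified Lean document; each statement's English description precedes it below -/
import Mathlib

section
/- Let n ≥ 1. The partial-sums map F : ℕ̄ⁿ → ℕ̄ⁿ_↗, F(m) = (m_1, m_1+m_2, …, m_1+⋯+m_n) (sums in ℕ̄, with +∞ absorbing), is continuous and surjective, and the induced map from the quotient space ℕ̄ⁿ/R_∞ (with the quotient topology) to ℕ̄ⁿ_↗ is a homeomorphism. -/
/-! Tuples in `ℕ̄ⁿ = (ℕ∞)ⁿ` (here `Fin n → ℕ∞`), their anchor and index (`0`-based: the
paper's `ε(m)` resp. `ι(m)`, with values in `{1, …, n+1}`, equals `anchor n m + 1` resp.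
`indexv n m + 1`), partial sums, and the equivalence relation `R_∞`. -/

/-- The (`0`-based) *anchor* of `m ∈ ℕ̄ⁿ`: the least `i` with `m i = ⊤`, and `n` if there is
no such `i` (the convention `m_{n+1} := +∞` of the paper). -/
noncomputable def anchor (n : ℕ) (m : Fin n → ℕ∞) : ℕ :=
  sInf {i : ℕ | n ≤ i ∨ ∃ h : i < n, m ⟨i, h⟩ = ⊤}

/-- The (`0`-based) *index* of `m ∈ ℕ̄ⁿ`: the least `i` with `m i ≠ 0`, and `n` if there is
no such `i` (the convention `m_{n+1} := +∞` of the paper). -/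
noncomputable def indexv (n : ℕ) (m : Fin n → ℕ∞) : ℕ :=
  sInf {i : ℕ | n ≤ i ∨ ∃ h : i < n, m ⟨i, h⟩ ≠ 0}

/-- The partial-sums map `ℕ̄ⁿ → ℕ̄ⁿ`, `m ↦ (m₁, m₁+m₂, …, m₁+⋯+m_n)` (`+∞` absorbing). -/
def psumE {n : ℕ} (m : Fin n → ℕ∞) : Fin n → ℕ∞ :=
  fun i => ∑ j ∈ Finset.Iic i, m j

/-- The partial-sums map `ℤⁿ → ℤⁿ`, `k ↦ (k₁, k₁+k₂, …, k₁+⋯+k_n)`. -/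
def psumZ {n : ℕ} (k : Fin n → ℤ) : Fin n → ℤ :=
  fun i => ∑ j ∈ Finset.Iic i, k j

/-- The equivalence relation `R_∞` on `ℕ̄ⁿ`: `(m, m') ∈ R_∞` iff `ε(m) = ε(m')` and
`mᵢ = m'ᵢ` for all `i < ε(m)`. -/
def Rinf (n : ℕ) (m m' : Fin n → ℕ∞) : Prop :=
  anchor n m = anchor n m' ∧ ∀ i : Fin n, (i : ℕ) < anchor n m → m i = m' i

/-- The sum `k + m ∈ ℕ̄` of `k : ℤ` and `m : ℕ̄` (with `k + ∞ = ∞`; for finite `m` the value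
is clamped to `0` when `m + k < 0`, which is immaterial under the condition `m + k ≥ 0`). -/
def addZE (k : ℤ) (m : ℕ∞) : ℕ∞ :=
  if m = ⊤ then ⊤ else ((((m.toNat : ℤ) + k).toNat : ℕ) : ℕ∞)

/-- The componentwise sum `k + m ∈ ℕ̄ⁿ` of `k : ℤⁿ` and `m : ℕ̄ⁿ`. -/
def addZv {n : ℕ} (k : Fin n → ℤ) (m : Fin n → ℕ∞) : Fin n → ℕ∞ :=
  fun i => addZE (k i) (m i)

/-- The condition `k + m ∈ ℕ̄ⁿ`: every component of the sum is `+∞` or a nonnegative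
integer. -/
def okAdd {n : ℕ} (k : Fin n → ℤ) (m : Fin n → ℕ∞) : Prop :=
  ∀ i : Fin n, m i = ⊤ ∨ 0 ≤ ((m i).toNat : ℤ) + k i

/-- `R_∞` as a setoid on `ℕ̄ⁿ`. -/
def rinfSetoid (n : ℕ) : Setoid (Fin n → ℕ∞) where
  r := Rinf n
  iseqv := by
    constructor
    · exact fun m => ⟨rfl, fun _ _ => rfl⟩
    · intro m m' h
      refine ⟨h.1.symm, fun i hi => ?_⟩
      rw [← h.1] at hi
      exact (h.2 i hi).symm
    · intro a b c h1 h2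
      refine ⟨h1.1.trans h2.1, fun i hi => ?_⟩
      refine (h1.2 i hi).trans (h2.2 i ?_)
      rwa [← h1.1]

/-- The partial-sums map `F : ℕ̄ⁿ → ℕ̄ⁿ_↗` as a map into the space of increasing tuples. -/
def FMap (n : ℕ) (m : Fin n → ℕ∞) : {k : Fin n → ℕ∞ // Monotone k} :=
  ⟨psumE m, fun i i' h => Finset.sum_le_sum_of_subset (Finset.Iic_subset_Iic.mpr h)⟩

/-! The `i`-th partial sum of `m` is infinite exactly when `i` is at or beyond the anchor of `m`,
and below the anchor consecutive partial sums are finite, so `m i` is recovered from them by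
cancellation. Hence `F m = F m'` iff `m R_∞ m'`, i.e. `R_∞` is the kernel of `F`; taking
differences of a monotone tuple shows that `F` is onto. As `ℕ̄ⁿ` is compact and `ℕ̄ⁿ_↗` is
Hausdorff, the continuous surjection `F` is a quotient map, which gives the homeomorphism. -/

section PartialSums

variable {n : ℕ}

lemma anchor_le (m : Fin n → ℕ∞) : anchor n m ≤ n :=
  Nat.sInf_le (Or.inl le_rfl)

lemma anchor_le_iff {m : Fin n → ℕ∞} (i : Fin n) :
    anchor n m ≤ i ↔ ∃ j ≤ i, m j = ⊤ := by
  constructor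
  · intro hi
    rcases Nat.sInf_mem (⟨n, Or.inl le_rfl⟩ : {i : ℕ | n ≤ i ∨ ∃ h : i < n, m ⟨i, h⟩ = ⊤}.Nonempty)
      with hn | ⟨ha, htop⟩
    · exact absurd (hi.trans_lt i.2) (not_lt.mpr hn)
    · exact ⟨⟨anchor n m, ha⟩, Fin.le_def.mpr hi, htop⟩
  · rintro ⟨j, hji, hj⟩
    exact (Nat.sInf_le (Or.inr ⟨j.2, hj⟩)).trans (Fin.le_def.mp hji)

lemma psumE_eq_top_iff (m : Fin n → ℕ∞) (i : Fin n) :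
    psumE m i = ⊤ ↔ anchor n m ≤ i := by
  simp [psumE, anchor_le_iff]

lemma anchor_le_of_psumE_eq {m m' : Fin n → ℕ∞} (h : psumE m = psumE m') :
    anchor n m' ≤ anchor n m := by
  rcases (anchor_le m).lt_or_eq with hlt | heq
  · simpa using (psumE_eq_top_iff m' ⟨_, hlt⟩).mp (h ▸ (psumE_eq_top_iff m _).mpr le_rfl)
  · exact heq.symm ▸ anchor_le m'

lemma psumE_zero (m : Fin n → ℕ∞) (h : 0 < n) : psumE m ⟨0, h⟩ = m ⟨0, h⟩ := by
  have : Finset.Iic (⟨0, h⟩ : Fin n) = {⟨0, h⟩} := by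
    ext x
    simp [Fin.le_def, Fin.ext_iff]
  rw [psumE, this, Finset.sum_singleton]

lemma psumE_succ (m : Fin n → ℕ∞) (j : ℕ) (h : j + 1 < n) :
    psumE m ⟨j + 1, h⟩ = psumE m ⟨j, by omega⟩ + m ⟨j + 1, h⟩ := by
  have : Finset.Iic (⟨j + 1, h⟩ : Fin n) = insert ⟨j + 1, h⟩ (Finset.Iic ⟨j, by omega⟩) := by
    ext x
    simp only [Finset.mem_Iic, Finset.mem_insert, Fin.le_def, Fin.ext_iff]
    omega
  rw [psumE, this, Finset.sum_insert (by simp [Fin.le_def]), psumE, add_comm]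

lemma eq_of_psumE_eq_of_lt_anchor {m m' : Fin n → ℕ∞} (h : psumE m = psumE m') (i : Fin n)
    (hi : (i : ℕ) < anchor n m) : m i = m' i := by
  obtain ⟨_ | j, hj⟩ := i
  · simpa only [psumE_zero] using congrFun h ⟨0, hj⟩
  · have hfin : psumE m ⟨j, by omega⟩ ≠ ⊤ := by
      rw [ne_eq, psumE_eq_top_iff]
      simp only at hi ⊢
      omega
    have hsucc := congrFun h ⟨j + 1, hj⟩
    rw [psumE_succ, psumE_succ, ← h] at hsucc
    exact WithTop.add_left_cancel hfin hsucc

lemma rinf_iff_psumE_eq {m m' : Fin n → ℕ∞} : Rinf n m m' ↔ psumE m = psumE m' := by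
  constructor
  · rintro ⟨hanchor, hbelow⟩
    funext i
    by_cases hi : anchor n m ≤ i
    · rw [(psumE_eq_top_iff m i).mpr hi, (psumE_eq_top_iff m' i).mpr (hanchor ▸ hi)]
    · exact Finset.sum_congr rfl fun j hj =>
        hbelow j ((Fin.le_def.mp (Finset.mem_Iic.mp hj)).trans_lt (not_le.mp hi))
  · intro h
    exact ⟨le_antisymm (anchor_le_of_psumE_eq h.symm) (anchor_le_of_psumE_eq h),
      eq_of_psumE_eq_of_lt_anchor h⟩

lemma exists_psumE_eq_of_monotone {k : Fin n → ℕ∞} (hk : Monotone k) : ∃ m, psumE m = k := by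
  refine ⟨fun i => k i - if h : (i : ℕ) = 0 then 0 else k ⟨i - 1, by omega⟩, ?_⟩
  funext ⟨j, hj⟩
  induction j with
  | zero => simp [psumE_zero]
  | succ j ih =>
    rw [psumE_succ _ j hj, ih (by omega)]
    simpa using add_tsub_cancel_of_le (hk (Fin.le_def.mpr (Nat.le_succ j)))

end PartialSums

lemma continuous_FMap (n : ℕ) : Continuous (FMap n) :=
  .subtype_mk (continuous_pi fun _ => continuous_finsetSum _ fun j _ => continuous_apply j) _

lemma surjective_FMap (n : ℕ) : Function.Surjective (FMap n) := fun ⟨_, hk⟩ =>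
  (exists_psumE_eq_of_monotone hk).imp fun _ hm => Subtype.ext hm

lemma rinfSetoid_eq_ker (n : ℕ) : rinfSetoid n = Setoid.ker (FMap n) := by
  ext m m'
  rw [Setoid.ker_def, Subtype.ext_iff]
  exact rinf_iff_psumE_eq

theorem stmt_10_general (n : ℕ) :
    Continuous (FMap n) ∧ Function.Surjective (FMap n) ∧
    ∃ h : Quotient (rinfSetoid n) ≃ₜ {k : Fin n → ℕ∞ // Monotone k},
      ∀ m : Fin n → ℕ∞, h (Quotient.mk (rinfSetoid n) m) = FMap n m := by
  refine ⟨continuous_FMap n, surjective_FMap n, ?_⟩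
  have hquot : Topology.IsQuotientMap (⟨FMap n, continuous_FMap n⟩ : C(_, _)) :=
    .of_surjective_continuous (surjective_FMap n) (continuous_FMap n)
  rw [rinfSetoid_eq_ker]
  exact ⟨hquot.homeomorph, fun _ => rfl⟩

/-- For `n ≥ 1`, the partial-sums map `F : ℕ̄ⁿ → ℕ̄ⁿ_↗` is continuous and
surjective, and the induced map from the quotient `ℕ̄ⁿ/R_∞` (with the quotient topology)
to `ℕ̄ⁿ_↗` (with the subspace topology of the product `ℕ̄ⁿ`) is a homeomorphism. -/
theorem stmt_10 (n : ℕ) (hn : 1 ≤ n) :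
    Continuous (FMap n) ∧ Function.Surjective (FMap n) ∧
    ∃ h : Quotient (rinfSetoid n) ≃ₜ {k : Fin n → ℕ∞ // Monotone k},
      ∀ m : Fin n → ℕ∞, h (Quotient.mk (rinfSetoid n) m) = FMap n m :=
  stmt_10_general n
end

section
/- Let E be the graph with two vertices 1, 2, loops ℓ_1, ℓ_2 and one edge r_1 from 1 to 2 (the graph of S³_q), and identify 𝒢¹ with ℤ × R_tail (R_tail = ℕ² ∪ {(+∞,+∞)} ⊆ ℕ̄²) via (x,k,y) ↦ (k, Ψ(x), Ψ(y)), where Ψ(ℓ_2^∞) = 0, Ψ(ℓ_1^m r_1 ℓ_2^∞) = m+1, Ψ(ℓ_1^∞) = +∞, with the transported graph-groupoid topology. Let F¹ := {(k_0,k_1,m_1) ∈ ℤ × ℤ × ℕ̄ : (m_1 = +∞ or m_1 + k_1 ≥ 0) and (m_1 = +∞ ⟹ k_0 + k_1 = 0)} with the subspace topology of ℤ × ℤ × ℕ̄ (ℤ discrete). Then the map (k_0,k_1,m_1) ↦ (k_0, k_1 + m_1, m_1) (where k_1 + (+∞) = +∞) is a homeomorphism from F¹ onto ℤ × R_tail;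 moreover it carries the composition (k_0',k_1',k_1+m_1)·(k_0,k_1,m_1) = (k_0+k_0', k_1+k_1', m_1) of F¹ to the composition (j,x,y)·(k,y,z) = (j+k,x,z) of 𝒢¹. -/
/-! Basic definitions: directed graphs, infinite path space, shift, finite paths,
shift equivalence, the graph groupoid and its topology (Kumjian-Pask-Raeburn-Renault). -/

variable {V E : Type*}

/-- The space `E^∞` of right-infinite paths of the graph with edge set `E`, source map `s`
and target map `t`, as a subset of the product `ℕ → E` (sequences of composable edges). -/
def PathSp (s t : E → V) : Set (ℕ → E) := {x | ∀ i : ℕ, t (x i) = s (x (i + 1))}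

/-- The one-sided shift on the infinite path space. -/
def shiftP (s t : E → V) (x : PathSp s t) : PathSp s t :=
  ⟨fun i => x.1 (i + 1), fun i => x.2 (i + 1)⟩

/-- Shift equivalence with lag `k`. -/
def SEquiv {X : Type*} (σ : X → X) (k : ℤ) (x y : X) : Prop :=
  ∃ j : ℕ, 0 ≤ (j : ℤ) + k ∧ σ^[j] x = σ^[((j : ℤ) + k).toNat] y

/-- A finite path in the graph: a composable (possibly empty) list of edges together with a
source vertex (so that vertices are the paths of length `0`). -/
structure FinPath (s t : E → V) where
  src : V
  edges : List E
  chain : edges.Chain' (fun e f => t e = s f)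
  srcOk : ∀ e ∈ edges.head?, s e = src

/-- The target of a finite path (its source, if the path has length 0). -/
def FinPath.tgt {s t : E → V} (α : FinPath s t) : V :=
  α.edges.getLast?.elim α.src t

/-- Concatenation of a finite list of edges with an infinite sequence of edges. -/
def catSeq (l : List E) (z : ℕ → E) : ℕ → E :=
  fun i => if h : i < l.length then l.get ⟨i, h⟩ else z (i - l.length)

/-- The basic set `Z(α,β) = {(αz, |β|-|α|, βz) : z ∈ E^∞, s(z) = t(α) = t(β)}` of the
graph groupoid. -/
def ZSet (s t : E → V) (α β : FinPath s t) :
    Set (↥(PathSp s t) × ℤ × ↥(PathSp s t)) :=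
  {q | ∃ z : ↥(PathSp s t), s (z.1 0) = α.tgt ∧ s (z.1 0) = β.tgt ∧
    q.1.1 = catSeq α.edges z.1 ∧
    q.2.1 = (β.edges.length : ℤ) - (α.edges.length : ℤ) ∧
    q.2.2.1 = catSeq β.edges z.1}

/-- The morphism space `𝒢¹ = {(x,k,y) : x ∼ₖ y}` of the graph groupoid. -/
def G1 (s t : E → V) : Type _ :=
  {q : ↥(PathSp s t) × ℤ × ↥(PathSp s t) // SEquiv (shiftP s t) q.2.1 q.1 q.2.2}

/-- The topology of the graph groupoid: generated by the sets `Z(α,β)` with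
`t(α) = t(β)`. -/
def G1Top (s t : E → V) : TopologicalSpace (G1 s t) :=
  TopologicalSpace.generateFrom
    {U | ∃ α β : FinPath s t, α.tgt = β.tgt ∧ U = Subtype.val ⁻¹' ZSet s t α β}

/-! The graph of the quantum sphere `S^{2n+1}_q` (Hong–Szymański, appendix version):
vertices `1, …, n+1` (here `Fin (n+1)`), a loop `ℓᵢ` at every vertex `i` (here `Sum.inl i`)
and an edge `rᵢ : i → i+1` for `1 ≤ i ≤ n` (here `Sum.inr i` for `i : Fin n`). -/

/-- The edge set of the graph of `S^{2n+1}_q`. -/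
abbrev SphE (n : ℕ) := Fin (n + 1) ⊕ Fin n

/-- Source map of the graph of `S^{2n+1}_q`. -/
def sphS (n : ℕ) : SphE n → Fin (n + 1)
  | .inl i => i
  | .inr i => i.castSucc

/-- Target map of the graph of `S^{2n+1}_q`. -/
def sphT (n : ℕ) : SphE n → Fin (n + 1)
  | .inl i => i
  | .inr i => i.succ

/-- The tail-equivalence relation `R_tail = ℕ² ∪ {(+∞, +∞)} ⊆ ℕ̄²` for `S³_q`. -/
def RT : Set (ℕ∞ × ℕ∞) :=
  {q | (q.1 ≠ ⊤ ∧ q.2 ≠ ⊤) ∨ (q.1 = ⊤ ∧ q.2 = ⊤)}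

/-- Membership in Sheu's groupoid `𝓕¹` for `S³_q`: `(k₀,k₁,m₁) ∈ ℤ × ℤ × ℕ̄` with
`m₁ = +∞ ∨ m₁ + k₁ ≥ 0`, and `k₀ + k₁ = 0` whenever `m₁ = +∞`. -/
def F1cond (p : ℤ × ℤ × ℕ∞) : Prop :=
  (p.2.2 = ⊤ ∨ 0 ≤ (p.2.2.toNat : ℤ) + p.2.1) ∧ (p.2.2 = ⊤ → p.1 + p.2.1 = 0)


/-! Every infinite path of the graph is `ℓ₁^∞`, `ℓ₂^∞` or `ℓ₁^m r₁ ℓ₂^∞`, so `Ψ` is a bijection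
onto `ℕ̄` and `(x, k, y) ↦ (k, Ψ x, Ψ y)` is a bijection from `𝒢¹` onto `ℤ × R_tail`; the map of the theorem is this bijection composed with the section
`(k₀, k₁, m₁) ↦ (Ψ⁻¹(k₁ + m₁), k₀, Ψ⁻¹ m₁)` of `𝓕¹` into `𝒢¹`, so it suffices that the section
and its inverse are continuous. Points of `𝒢¹` with finite legs are isolated (a cylinder
`Z(x₁…xᵢ, y₁…yⱼ)` reaching past the edge `r₁` is a singleton), as are the points of `𝓕¹` with
`m₁` finite. At `(ℓ₁^∞, k, ℓ₁^∞)` the cylinders `Z(ℓ₁^i, ℓ₁^j)` with `j - i = k` form a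
neighbourhood basis, and they correspond to the tails `{(k, -k, m) : m > j}` at `(k, -k, ∞)`
in `𝓕¹`. -/

open Topology

section GraphGroupoid

variable {s t : E → V}

lemma iterate_shiftP_apply (x : PathSp s t) (j i : ℕ) :
    ((shiftP s t)^[j] x).1 i = x.1 (i + j) := by
  induction j generalizing x with
  | zero => rfl
  | succ j ih => rw [Function.iterate_succ_apply, ih]; rfl

def prefixPath (x : PathSp s t) (n : ℕ) : FinPath s t where
  src := s (x.1 0)
  edges := List.ofFn fun i : Fin n => x.1 i
  chain := by
    show List.IsChain _ _
    rw [List.isChain_iff_getElem]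
    intro i _
    simpa using x.2 i
  srcOk := by
    cases n with
    | zero => simp
    | succ n => simp [List.ofFn_succ]

@[simp] lemma prefixPath_length (x : PathSp s t) (n : ℕ) :
    (prefixPath x n).edges.length = n := by
  simp [prefixPath]

lemma prefixPath_tgt (x : PathSp s t) (n : ℕ) : (prefixPath x n).tgt = s (x.1 n) := by
  cases n with
  | zero => rfl
  | succ n =>
    simp only [FinPath.tgt, prefixPath, List.getLast?_eq_getElem?, List.length_ofFn,
      List.getElem?_ofFn]
    simpa using x.2 n

lemma catSeq_prefixPath (x : PathSp s t) (n : ℕ) :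
    catSeq (prefixPath x n).edges ((shiftP s t)^[n] x).1 = x.1 := by
  funext i
  simp only [catSeq, prefixPath_length, iterate_shiftP_apply]
  split_ifs with h
  · simp [prefixPath]
  · rw [Nat.sub_add_cancel (not_lt.mp h)]

lemma mem_ZSet_prefixPath {x y : PathSp s t} {i j : ℕ}
    (h : (shiftP s t)^[i] x = (shiftP s t)^[j] y) :
    (x, (j : ℤ) - i, y) ∈ ZSet s t (prefixPath x i) (prefixPath y j) := by
  refine ⟨(shiftP s t)^[i] x, ?_, ?_, (catSeq_prefixPath x i).symm, by simp, ?_⟩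
  · rw [prefixPath_tgt, iterate_shiftP_apply, zero_add]
  · rw [prefixPath_tgt, h, iterate_shiftP_apply, zero_add]
  · rw [h, catSeq_prefixPath]

lemma prefixPath_tgt_eq {x y : PathSp s t} {i j : ℕ}
    (h : (shiftP s t)^[i] x = (shiftP s t)^[j] y) :
    (prefixPath x i).tgt = (prefixPath y j).tgt := by
  rw [prefixPath_tgt, prefixPath_tgt, ← zero_add i, ← zero_add j, ← iterate_shiftP_apply,
    ← iterate_shiftP_apply, h]

lemma eq_of_mem_ZSet_prefixPath {x y : PathSp s t} {i j : ℕ}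
    (h : (shiftP s t)^[i] x = (shiftP s t)^[j] y)
    (huniq : ∀ z : PathSp s t, s (z.1 0) = s (x.1 i) → z = (shiftP s t)^[i] x)
    {q : PathSp s t × ℤ × PathSp s t} (hq : q ∈ ZSet s t (prefixPath x i) (prefixPath y j)) :
    q = (x, (j : ℤ) - i, y) := by
  obtain ⟨z, hzx, -, hx, hk, hy⟩ := hq
  obtain rfl := huniq z (by rw [hzx, prefixPath_tgt])
  refine Prod.ext (Subtype.ext ?_) (Prod.ext (by simpa using hk) (Subtype.ext ?_))
  · rw [hx, catSeq_prefixPath]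
  · rw [hy, h, catSeq_prefixPath]

lemma isOpen_G1Top_preimage_ZSet {α β : FinPath s t} (h : α.tgt = β.tgt) :
    IsOpen[G1Top s t] (Subtype.val ⁻¹' ZSet s t α β) :=
  TopologicalSpace.isOpen_generateFrom_of_mem ⟨α, β, h, rfl⟩

end GraphGroupoid

lemma SEquiv.exists_iterate_eq {X : Type*} {σ : X → X} {k : ℤ} {x y : X}
    (h : SEquiv σ k x y) (N : ℕ) :
    ∃ i j : ℕ, N ≤ i ∧ (j : ℤ) - i = k ∧ σ^[i] x = σ^[j] y := by
  obtain ⟨i, hik, hxy⟩ := h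
  refine ⟨N + i, N + ((i : ℤ) + k).toNat, by omega, by omega, ?_⟩
  rw [Function.iterate_add_apply, Function.iterate_add_apply, hxy]

lemma continuous_induced_coinduced_of_comp {X Y Z : Type*} {tX : TopologicalSpace X}
    [TopologicalSpace Z] {π : X → Y} {A : Set Y} (hA : ∀ x, π x ∈ A) {h : A → Z}
    (hh : Continuous[tX, _] fun x => h ⟨π x, hA x⟩) :
    Continuous[TopologicalSpace.induced (↑) (TopologicalSpace.coinduced π tX), _] h := by
  let _ := TopologicalSpace.coinduced π tX
  refine continuous_def.2 fun O hO => isOpen_induced_iff.2 ⟨(↑) '' (h ⁻¹' O) ∪ Aᶜ, ?_, ?_⟩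
  · have : π ⁻¹' ((↑) '' (h ⁻¹' O) ∪ Aᶜ) = (fun x => h ⟨π x, hA x⟩) ⁻¹' O := by
      ext x
      simp [hA x]
    exact isOpen_coinduced.2 (by rw [this]; exact hO.preimage hh)
  · ext a
    simp

section SpherePaths

local notation "σ" => shiftP (sphS 1) (sphT 1)

abbrev SphPath := ↥(PathSp (sphS 1) (sphT 1))

def pathInf : SphPath := ⟨fun _ => .inl 0, fun _ => rfl⟩

/-- `ℓ₁^(n-1) r₁ ℓ₂^∞` for `n ≥ 1` and `ℓ₂^∞` for `n = 0`: the path with `Ψ`-value `n`. -/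
def pathN (n : ℕ) : SphPath :=
  ⟨fun j => if j + 1 < n then .inl 0 else if j + 1 = n then .inr 0 else .inl 1, by
    intro j
    simp only
    split_ifs <;> first | rfl | omega⟩

lemma shiftP_pathInf : σ pathInf = pathInf := rfl

lemma shiftP_pathN (n : ℕ) : σ (pathN n) = pathN (n - 1) := by
  refine Subtype.ext (funext fun j => ?_)
  simp only [shiftP, pathN]
  split_ifs <;> first | rfl | omega

lemma iterate_shiftP_pathInf (j : ℕ) : σ^[j] pathInf = pathInf :=
  Function.iterate_fixed shiftP_pathInf j

lemma iterate_shiftP_pathN (j n : ℕ) : σ^[j] (pathN n) = pathN (n - j) := by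
  induction j with
  | zero => rfl
  | succ j ih => rw [Function.iterate_succ_apply', ih, shiftP_pathN, Nat.sub_sub]

lemma pathN_ne_pathInf (n : ℕ) : pathN n ≠ pathInf := by
  intro h
  have := congrArg (fun x : SphPath => x.1 n) h
  simp [pathN, pathInf] at this

lemma eq_inl_one_of_sphS_eq_one {e : SphE 1} (h : sphS 1 e = 1) : e = .inl 1 := by
  rcases e with i | i
  · simp only [sphS] at h
    rw [h]
  · exact absurd h (by simp [sphS, Fin.ext_iff])

lemma eq_inl_one_of_sphS_eq_one_of_le {x : SphPath} {i : ℕ} (h : sphS 1 (x.1 i) = 1) :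
    ∀ j, i ≤ j → x.1 j = .inl 1 := by
  intro j hij
  induction j, hij using Nat.le_induction with
  | base => exact eq_inl_one_of_sphS_eq_one h
  | succ j _ ih => exact eq_inl_one_of_sphS_eq_one (by rw [← x.2 j, ih]; rfl)

lemma eq_pathInf_or_pathN (x : SphPath) : x = pathInf ∨ ∃ n, x = pathN n := by
  by_cases hall : ∀ j, x.1 j = .inl 0
  · exact Or.inl (Subtype.ext (funext hall))
  simp only [not_forall] at hall
  set m := Nat.find hall
  have hm : x.1 m ≠ .inl 0 := Nat.find_spec hall
  have hlt : ∀ j < m, x.1 j = .inl 0 := fun j hj => not_not.1 (Nat.find_min hall hj)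
  right
  rcases hxm : x.1 m with i | i
  · obtain rfl : i = 1 := by
      fin_cases i
      · exact absurd hxm hm
      · rfl
    have hm0 : m = 0 := by
      by_contra hm0
      have := x.2 (m - 1)
      rw [hlt _ (by omega), Nat.sub_add_cancel (by omega), hxm] at this
      exact absurd this (by decide)
    refine ⟨0, Subtype.ext (funext fun j => ?_)⟩
    exact eq_inl_one_of_sphS_eq_one_of_le (i := 0) (by rw [hm0] at hxm; rw [hxm]; rfl) j (Nat.zero_le j)
  · obtain rfl : i = 0 := Subsingleton.elim _ _
    refine ⟨m + 1, Subtype.ext (funext fun j => ?_)⟩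
    have htail := eq_inl_one_of_sphS_eq_one_of_le (x := x) (i := m + 1) (by rw [← x.2 m, hxm]; rfl)
    simp only [pathN]
    split_ifs with h1 h2
    · exact hlt j (by omega)
    · rw [show j = m by omega, hxm]
    · exact htail j (by omega)

lemma eq_pathN_zero_of_sphS_eq_one {z : SphPath} (h : sphS 1 (z.1 0) = 1) : z = pathN 0 :=
  Subtype.ext (funext fun j => eq_inl_one_of_sphS_eq_one_of_le h j (Nat.zero_le j))

lemma eq_pathInf_or_pathN_succ {z : SphPath} (h : sphS 1 (z.1 0) = 0) :
    z = pathInf ∨ ∃ n, z = pathN (n + 1) := by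
  rcases eq_pathInf_or_pathN z with hz | ⟨_ | n, hz⟩
  · exact Or.inl hz
  · subst hz; exact absurd h (by decide)
  · exact Or.inr ⟨n, hz⟩

lemma iterate_shiftP_eq_pathInf_iff {x : SphPath} {j : ℕ} :
    σ^[j] x = pathInf ↔ x = pathInf := by
  refine ⟨fun h => ?_, fun h => h ▸ iterate_shiftP_pathInf j⟩
  rcases eq_pathInf_or_pathN x with hx | ⟨n, rfl⟩
  · exact hx
  · exact absurd (iterate_shiftP_pathN j n ▸ h) (pathN_ne_pathInf _)

end SpherePaths

section LoopWords

local notation "σ" => shiftP (sphS 1) (sphT 1)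

lemma sphS_pathN_succ (n : ℕ) : sphS 1 ((pathN (n + 1)).1 0) = 0 := by
  simp only [pathN]
  split_ifs <;> first | rfl | omega

lemma catSeq_loops_pathInf {l : List (SphE 1)} (hl : ∀ e ∈ l, e = .inl 0) :
    catSeq l pathInf.1 = pathInf.1 := by
  funext i
  unfold catSeq
  split_ifs
  · exact hl _ (List.get_mem l _)
  · rfl

lemma catSeq_loops_pathN {l : List (SphE 1)} (hl : ∀ e ∈ l, e = .inl 0) (n : ℕ) :
    catSeq l (pathN (n + 1)).1 = (pathN (l.length + n + 1)).1 := by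
  funext i
  unfold catSeq
  split_ifs with hi
  · rw [hl _ (List.get_mem l _)]
    simp only [pathN]
    rw [if_pos (by omega)]
  · simp only [pathN]
    split_ifs <;> first | rfl | omega

lemma loops_of_catSeq_eq_pathInf {l : List (SphE 1)} {z : ℕ → SphE 1}
    (h : catSeq l z = pathInf.1) : (∀ e ∈ l, e = .inl 0) ∧ z = pathInf.1 := by
  refine ⟨fun e he => ?_, funext fun i => ?_⟩
  · obtain ⟨i, rfl⟩ := List.get_of_mem he
    simpa [catSeq, pathInf] using congrFun h i
  · simpa [catSeq, pathInf] using congrFun h (l.length + i)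

lemma mem_ZSet_loops_iff {α β : FinPath (sphS 1) (sphT 1)}
    (hα : ∀ e ∈ α.edges, e = .inl 0) (hβ : ∀ e ∈ β.edges, e = .inl 0)
    (hαt : α.tgt = 0) (hβt : β.tgt = 0) (q : SphPath × ℤ × SphPath) :
    q ∈ ZSet (sphS 1) (sphT 1) α β ↔
      q.2.1 = (β.edges.length : ℤ) - α.edges.length ∧
        ((q.1 = pathInf ∧ q.2.2 = pathInf) ∨
          ∃ n, q.1 = pathN (α.edges.length + n + 1) ∧ q.2.2 = pathN (β.edges.length + n + 1)) := by
  constructor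
  · rintro ⟨z, hzα, -, hx, hk, hy⟩
    refine ⟨hk, ?_⟩
    rcases eq_pathInf_or_pathN_succ (hzα.trans hαt) with rfl | ⟨n, rfl⟩
    · exact Or.inl ⟨Subtype.ext (hx.trans (catSeq_loops_pathInf hα)),
        Subtype.ext (hy.trans (catSeq_loops_pathInf hβ))⟩
    · exact Or.inr ⟨n, Subtype.ext (hx.trans (catSeq_loops_pathN hα n)),
        Subtype.ext (hy.trans (catSeq_loops_pathN hβ n))⟩
  · rintro ⟨hk, ⟨hx, hy⟩ | ⟨n, hx, hy⟩⟩
    · exact ⟨pathInf, hαt.symm, hβt.symm, by rw [hx, catSeq_loops_pathInf hα], hk,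
        by rw [hy, catSeq_loops_pathInf hβ]⟩
    · exact ⟨pathN (n + 1), (sphS_pathN_succ n).trans hαt.symm,
        (sphS_pathN_succ n).trans hβt.symm, by rw [hx, catSeq_loops_pathN hα n], hk,
        by rw [hy, catSeq_loops_pathN hβ n]⟩

lemma loops_of_mem_ZSet {α β : FinPath (sphS 1) (sphT 1)} {k : ℤ}
    (h : (pathInf, k, pathInf) ∈ ZSet (sphS 1) (sphT 1) α β) :
    (∀ e ∈ α.edges, e = .inl 0) ∧ (∀ e ∈ β.edges, e = .inl 0) ∧ α.tgt = 0 ∧ β.tgt = 0 := by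
  obtain ⟨z, hzα, hzβ, hx, -, hy⟩ := h
  obtain ⟨hα, hz⟩ := loops_of_catSeq_eq_pathInf hx.symm
  have hz0 : sphS 1 (z.1 0) = 0 := by rw [hz]; rfl
  exact ⟨hα, (loops_of_catSeq_eq_pathInf hy.symm).1, hzα ▸ hz0, hzβ ▸ hz0⟩

lemma prefixPath_pathInf_loops (n : ℕ) : ∀ e ∈ (prefixPath pathInf n).edges, e = .inl 0 := by
  simp [prefixPath, pathInf]

lemma prefixPath_pathInf_tgt (n : ℕ) : (prefixPath pathInf n).tgt = 0 := prefixPath_tgt _ n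

end LoopWords

section SphereGroupoid

local notation "σ" => shiftP (sphS 1) (sphT 1)
local notation "GG" => G1 (sphS 1) (sphT 1)

lemma G1.fst_eq_pathInf_iff (g : GG) : g.1.1 = pathInf ↔ g.1.2.2 = pathInf := by
  obtain ⟨j, -, h⟩ := g.2
  constructor
  · intro hx
    rw [hx, iterate_shiftP_pathInf] at h
    exact iterate_shiftP_eq_pathInf_iff.1 h.symm
  · intro hy
    rw [hy, iterate_shiftP_pathInf] at h
    exact iterate_shiftP_eq_pathInf_iff.1 h

lemma sEquiv_pathN (a b : ℕ) (k : ℤ) : SEquiv σ k (pathN a) (pathN b) := by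
  refine ⟨a + b + (-k).toNat, by omega, ?_⟩
  rw [iterate_shiftP_pathN, iterate_shiftP_pathN]
  congr 1
  omega

lemma sEquiv_pathInf (k : ℤ) : SEquiv σ k pathInf pathInf :=
  ⟨(-k).toNat, by omega, by rw [iterate_shiftP_pathInf, iterate_shiftP_pathInf]⟩

lemma G1.isOpen_singleton {g : GG} (hx : g.1.1 ≠ pathInf) :
    IsOpen[G1Top (sphS 1) (sphT 1)] ({g} : Set GG) := by
  obtain ⟨a, ha⟩ := (eq_pathInf_or_pathN g.1.1).resolve_left hx
  obtain ⟨i, j, hai, hk, hij⟩ := SEquiv.exists_iterate_eq g.2 a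
  have hxi : σ^[i] g.1.1 = pathN 0 := by
    rw [ha, iterate_shiftP_pathN, Nat.sub_eq_zero_of_le hai]
  have huniq : ∀ z : SphPath, sphS 1 (z.1 0) = sphS 1 (g.1.1.1 i) → z = σ^[i] g.1.1 := by
    intro z hz
    rw [hxi]
    apply eq_pathN_zero_of_sphS_eq_one
    rw [hz, ← zero_add i, ← iterate_shiftP_apply, hxi]
    rfl
  have hsingle : ({g} : Set GG) = Subtype.val ⁻¹'
      ZSet (sphS 1) (sphT 1) (prefixPath g.1.1 i) (prefixPath g.1.2.2 j) := by
    ext g'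
    simp only [Set.mem_singleton_iff]
    constructor
    · rintro rfl
      show g'.1 ∈ ZSet _ _ _ _
      simpa only [hk] using mem_ZSet_prefixPath hij
    · intro hq
      exact Subtype.ext ((eq_of_mem_ZSet_prefixPath hij huniq hq).trans (by rw [hk]))
  rw [hsingle]
  exact isOpen_G1Top_preimage_ZSet (prefixPath_tgt_eq hij)

end SphereGroupoid

section SheuGroupoid

abbrev F1 := {p : ℤ × ℤ × ℕ∞ // F1cond p}

abbrev ZRTail := {p : ℤ × ℕ∞ × ℕ∞ // (p.2.1, p.2.2) ∈ RT}

@[simp] lemma addZE_top (k : ℤ) : addZE k ⊤ = ⊤ := if_pos rfl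

@[simp] lemma addZE_natCast (k : ℤ) (n : ℕ) : addZE k n = ((n + k).toNat : ℕ) := by
  simp [addZE]

lemma addZE_add {k k' : ℤ} {m : ℕ∞} (h : m = ⊤ ∨ 0 ≤ (m.toNat : ℤ) + k) :
    addZE (k + k') m = addZE k' (addZE k m) := by
  induction m using ENat.recTopCoe with
  | top => simp
  | coe n =>
    simp only [ENat.toNat_natCast, ENat.natCast_ne_top, false_or] at h
    simp only [addZE_natCast, Int.toNat_of_nonneg h]
    congr 2
    omega

def F1.toRT (p : F1) : ZRTail :=
  ⟨(p.1.1, addZE p.1.2.1 p.1.2.2, p.1.2.2), by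
    by_cases hm : p.1.2.2 = ⊤
    · exact Or.inr ⟨by simp [hm], hm⟩
    · exact Or.inl ⟨by simp [addZE, hm], hm⟩⟩

/-- At `(⊤, ⊤)` the middle coordinate is forced by `k₀ + k₁ = 0`. -/
def F1.ofRT (v : ZRTail) : F1 :=
  ⟨(v.1.1, if v.1.2.2 = ⊤ then -v.1.1 else (v.1.2.1.toNat : ℤ) - v.1.2.2.toNat, v.1.2.2), by
    by_cases hb : v.1.2.2 = ⊤ <;> simp [F1cond, hb]⟩

def F1.equivRT : F1 ≃ ZRTail where
  toFun := F1.toRT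
  invFun := F1.ofRT
  left_inv := by
    rintro ⟨⟨k₀, k₁, m⟩, hp⟩
    apply Subtype.ext
    induction m using ENat.recTopCoe with
    | top =>
      have : k₀ + k₁ = 0 := hp.2 rfl
      simp only [F1.toRT, F1.ofRT, addZE_top, if_true, Prod.mk.injEq, true_and, and_true]
      omega
    | coe n =>
      simp only [F1cond, ENat.natCast_ne_top, false_or, ENat.toNat_natCast, false_imp_iff,
        and_true] at hp
      simp [F1.toRT, F1.ofRT, Int.toNat_of_nonneg hp]
  right_inv := by
    rintro ⟨⟨k, a, b⟩, hv⟩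
    apply Subtype.ext
    simp only [RT, Set.mem_ofPred_eq] at hv
    obtain ⟨ha, hb⟩ | ⟨rfl, rfl⟩ := hv
    · lift a to ℕ using ha
      lift b to ℕ using hb
      simp [F1.toRT, F1.ofRT]
    · simp [F1.toRT, F1.ofRT]

lemma F1.isOpen_singleton {p : F1} (hp : p.1.2.2 ≠ ⊤) : IsOpen {p} := by
  have : ({p} : Set F1) = Subtype.val ⁻¹' ({p.1.1} ×ˢ {p.1.2.1} ×ˢ {p.1.2.2}) := by
    ext q
    simp [Subtype.ext_iff, Prod.ext_iff]
  rw [this]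
  exact ((isOpen_discrete _).prod ((isOpen_discrete _).prod (ENat.isOpen_singleton hp))).preimage
    continuous_subtype_val

lemma F1.mem_nhds_of_eq_top {p : F1} (hp : p.1.2.2 = ⊤) (M : ℕ) :
    {q : F1 | q.1.1 = p.1.1 ∧ q.1.2.1 = p.1.2.1 ∧ (M : ℕ∞) < q.1.2.2} ∈ 𝓝 p := by
  refine IsOpen.mem_nhds (((isOpen_discrete {p.1.1}).prod ((isOpen_discrete {p.1.2.1}).prod
    (isOpen_Ioi (a := (M : ℕ∞))))).preimage continuous_subtype_val) ⟨rfl, rfl, ?_⟩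
  simp [hp]

lemma F1.exists_forall_of_mem_nhds {p : F1} (hp : p.1.2.2 = ⊤) {N : Set F1} (hN : N ∈ 𝓝 p) :
    ∃ M : ℕ, ∀ q : F1, q.1.1 = p.1.1 → q.1.2.1 = p.1.2.1 → (M : ℕ∞) < q.1.2.2 → q ∈ N := by
  obtain ⟨u, hu, huN⟩ := (mem_nhds_subtype _ _ _).1 hN
  have hu' : (fun m : ℕ∞ => (p.1.1, p.1.2.1, m)) ⁻¹' u ∈ 𝓝 ⊤ :=
    (by fun_prop : Continuous fun m : ℕ∞ => (p.1.1, p.1.2.1, m)).continuousAt.preimage_mem_nhds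
      (by rwa [← hp])
  obtain ⟨a, ha, hau⟩ := nhds_top_basis.mem_iff.1 hu'
  lift a to ℕ using ha.ne
  refine ⟨a, fun q h₀ h₁ hM => huN ?_⟩
  have := hau hM
  rwa [← h₀, ← h₁] at this

end SheuGroupoid

section Transport

local notation "GG" => G1 (sphS 1) (sphT 1)

variable {Ψ : SphPath → ℕ∞}

lemma apply_pathN
    (hΨ2 : ∀ x : SphPath, (∀ j : ℕ, x.1 j = Sum.inl 1) → Ψ x = 0)
    (hΨm : ∀ (m : ℕ) (x : SphPath), (∀ j : ℕ, x.1 j =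
        if j < m then (Sum.inl 0 : SphE 1) else if j = m then Sum.inr 0 else Sum.inl 1) →
      Ψ x = (m : ℕ∞) + 1) (n : ℕ) :
    Ψ (pathN n) = n := by
  cases n with
  | zero => exact hΨ2 _ fun j => by simp [pathN]
  | succ n =>
    rw [hΨm n _ fun j => by simp only [pathN]; split_ifs <;> first | rfl | omega]
    push_cast
    rfl

noncomputable def pathOf (m : ℕ∞) : SphPath := if m = ⊤ then pathInf else pathN m.toNat

@[simp] lemma pathOf_top : pathOf ⊤ = pathInf := if_pos rfl

@[simp] lemma pathOf_natCast (n : ℕ) : pathOf n = pathN n := by simp [pathOf]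

lemma apply_pathOf (hN : ∀ n, Ψ (pathN n) = n) (hInf : Ψ pathInf = ⊤)
    (m : ℕ∞) : Ψ (pathOf m) = m := by
  induction m using ENat.recTopCoe with
  | top => simpa using hInf
  | coe n => simpa using hN n

noncomputable def F1.toG1 (p : F1) : GG :=
  ⟨(pathOf (addZE p.1.2.1 p.1.2.2), p.1.1, pathOf p.1.2.2), by
    obtain ⟨⟨k₀, k₁, m⟩, -⟩ := p
    induction m using ENat.recTopCoe with
    | top => simpa using sEquiv_pathInf k₀
    | coe n => simpa using sEquiv_pathN _ n k₀⟩

lemma F1.continuous_toG1 : Continuous[_, G1Top (sphS 1) (sphT 1)] F1.toG1 := by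
  refine continuous_generateFrom_iff.2 ?_
  rintro _ ⟨α, β, -, rfl⟩
  refine isOpen_iff_mem_nhds.2 fun p hp => ?_
  by_cases hm : p.1.2.2 = ⊤
  swap
  · exact Filter.mem_of_superset ((F1.isOpen_singleton hm).mem_nhds rfl)
      (Set.singleton_subset_iff.2 hp)
  have hφ : (F1.toG1 p).1 = (pathInf, p.1.1, pathInf) := by simp [F1.toG1, hm]
  change (F1.toG1 p).1 ∈ ZSet _ _ α β at hp
  rw [hφ] at hp
  obtain ⟨hα, hβ, hαt, hβt⟩ := loops_of_mem_ZSet hp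
  have hlen : p.1.1 = (β.edges.length : ℤ) - α.edges.length :=
    ((mem_ZSet_loops_iff hα hβ hαt hβt _).1 hp).1
  have hk : p.1.2.1 = -p.1.1 := by linarith [p.2.2 hm]
  filter_upwards [F1.mem_nhds_of_eq_top hm β.edges.length] with q hq
  obtain ⟨⟨k₀, k₁, m⟩, _⟩ := q
  obtain ⟨h₀, h₁, hM⟩ := hq
  change (F1.toG1 _).1 ∈ ZSet _ _ α β
  rw [mem_ZSet_loops_iff hα hβ hαt hβt]
  simp only at h₀ h₁ hM
  subst h₀ h₁
  refine ⟨hlen, ?_⟩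
  induction m using ENat.recTopCoe with
  | top => simp [F1.toG1]
  | coe n =>
    obtain ⟨d, rfl⟩ : ∃ d, n = β.edges.length + d + 1 :=
      ⟨n - β.edges.length - 1, by have := ENat.natCast_lt_natCast.1 hM; omega⟩
    refine Or.inr ⟨d, ?_, rfl⟩
    simp only [F1.toG1, addZE_natCast, pathOf_natCast]
    congr 1
    omega

def coordG1 (Ψ : SphPath → ℕ∞) (g : GG) : ℤ × ℕ∞ × ℕ∞ := (g.1.2.1, Ψ g.1.1, Ψ g.1.2.2)

lemma coordG1_mem_RT (hN : ∀ n, Ψ (pathN n) = n) (hInf : Ψ pathInf = ⊤) (g : GG) :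
    ((coordG1 Ψ g).2.1, (coordG1 Ψ g).2.2) ∈ RT := by
  by_cases hx : g.1.1 = pathInf
  · exact Or.inr ⟨by simp [coordG1, hx, hInf], by simp [coordG1, (G1.fst_eq_pathInf_iff g).1 hx, hInf]⟩
  · obtain ⟨a, ha⟩ := (eq_pathInf_or_pathN g.1.1).resolve_left hx
    obtain ⟨b, hb⟩ := (eq_pathInf_or_pathN g.1.2.2).resolve_left
      (mt (G1.fst_eq_pathInf_iff g).2 hx)
    exact Or.inl ⟨by simp [coordG1, ha, hN], by simp [coordG1, hb, hN]⟩

lemma continuous_ofRT_coordG1 (hN : ∀ n, Ψ (pathN n) = n) (hInf : Ψ pathInf = ⊤) :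
    Continuous[G1Top (sphS 1) (sphT 1), _]
      fun g => F1.ofRT ⟨coordG1 Ψ g, coordG1_mem_RT hN hInf g⟩ := by
  let _ := G1Top (sphS 1) (sphT 1)
  refine continuous_iff_continuousAt.2 fun g => ?_
  by_cases hx : g.1.1 ≠ pathInf
  · rw [ContinuousAt, (isOpen_singleton_iff_nhds_eq_pure g).1 (G1.isOpen_singleton hx)]
    exact tendsto_pure_nhds _ g
  rw [not_not] at hx
  have hy := (G1.fst_eq_pathInf_iff g).1 hx
  intro N hNg
  obtain ⟨M, hM⟩ := F1.exists_forall_of_mem_nhds (by simp [F1.ofRT, coordG1, hy, hInf]) hNg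
  simp only [F1.ofRT, coordG1, hy, hInf, if_true] at hM
  obtain ⟨i, j, hMi, hk, -⟩ := SEquiv.exists_iterate_eq g.2 (M + g.1.2.1.natAbs)
  have htube := mem_ZSet_loops_iff (prefixPath_pathInf_loops i) (prefixPath_pathInf_loops j)
    (prefixPath_pathInf_tgt i) (prefixPath_pathInf_tgt j)
  simp only [prefixPath_length] at htube
  have hg : g.1 ∈ ZSet (sphS 1) (sphT 1) (prefixPath pathInf i) (prefixPath pathInf j) :=
    (htube _).2 ⟨hk.symm, Or.inl ⟨hx, hy⟩⟩
  have htube_nhds : (Subtype.val ⁻¹' ZSet (sphS 1) (sphT 1) (prefixPath pathInf i)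
      (prefixPath pathInf j) : Set GG) ∈ 𝓝 g :=
    (isOpen_G1Top_preimage_ZSet (by rw [prefixPath_pathInf_tgt, prefixPath_pathInf_tgt])).mem_nhds hg
  refine Filter.mem_map.2 ?_
  filter_upwards [htube_nhds] with g' hg'
  obtain ⟨hk', ⟨hx', hy'⟩ | ⟨n, hx', hy'⟩⟩ := (htube _).1 hg'
  · apply hM <;> simp [F1.ofRT, coordG1, hx', hy', hInf, hk', hk]
  · apply hM
    · simp [F1.ofRT, coordG1, hk', hk]
    · simp only [F1.ofRT, coordG1, hx', hy', hN, ENat.natCast_ne_top, if_false, ENat.toNat_natCast]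
      omega
    · simp only [F1.ofRT, coordG1, hy', hN, Nat.cast_lt]
      omega

end Transport

/-- For the graph of `S³_q`, with `Ψ` as in Statement 11 and the
graph-groupoid topology transported to `ℤ × R_tail` along `(x,k,y) ↦ (k, Ψ(x), Ψ(y))`
(i.e. the coinduced topology, restricted to `ℤ × R_tail`), the map
`(k₀,k₁,m₁) ↦ (k₀, k₁ + m₁, m₁)` is a homeomorphism from `𝓕¹` (subspace of `ℤ × ℤ × ℕ̄`)
onto `ℤ × R_tail`, and it carries the composition of `𝓕¹` to that of `𝒢¹`. -/
theorem stmt_13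
    (Ψ : ↥(PathSp (sphS 1) (sphT 1)) → ℕ∞)
    (hΨ2 : ∀ x : ↥(PathSp (sphS 1) (sphT 1)),
      (∀ j : ℕ, x.1 j = Sum.inl 1) → Ψ x = 0)
    (hΨm : ∀ (m : ℕ) (x : ↥(PathSp (sphS 1) (sphT 1))),
      (∀ j : ℕ, x.1 j =
        if j < m then (Sum.inl 0 : SphE 1) else if j = m then Sum.inr 0 else Sum.inl 1) →
      Ψ x = (m : ℕ∞) + 1)
    (hΨ1 : ∀ x : ↥(PathSp (sphS 1) (sphT 1)),
      (∀ j : ℕ, x.1 j = Sum.inl 0) → Ψ x = ⊤) :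
    ∃ h : @Homeomorph {p : ℤ × ℤ × ℕ∞ // F1cond p} {p : ℤ × ℕ∞ × ℕ∞ // (p.2.1, p.2.2) ∈ RT}
      inferInstance
      (TopologicalSpace.induced Subtype.val
        (TopologicalSpace.coinduced
          (fun g : G1 (sphS 1) (sphT 1) => ((g.1.2.1, Ψ g.1.1, Ψ g.1.2.2) : ℤ × ℕ∞ × ℕ∞))
          (G1Top (sphS 1) (sphT 1)))),
      (∀ p : {p : ℤ × ℤ × ℕ∞ // F1cond p},
        (h p).1 = (p.1.1, addZE p.1.2.1 p.1.2.2, p.1.2.2)) ∧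
      (∀ (k0 k1 k0' k1' : ℤ) (m1 : ℕ∞),
        F1cond (k0, k1, m1) → F1cond (k0', k1', addZE k1 m1) →
        ((k0 + k0', addZE (k1 + k1') m1, m1) : ℤ × ℕ∞ × ℕ∞)
          = (k0' + k0, addZE k1' (addZE k1 m1), m1)) := by
  have hN := apply_pathN hΨ2 hΨm
  have hInf : Ψ pathInf = ⊤ := hΨ1 pathInf fun _ => rfl
  refine ⟨@Homeomorph.mk _ _ _ (.induced Subtype.val (.coinduced (coordG1 Ψ) (G1Top _ _)))
    F1.equivRT ?_ ?_, fun _ => rfl, ?_⟩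
  · have hcomp : Subtype.val ∘ F1.equivRT.toFun = coordG1 Ψ ∘ F1.toG1 := by
      funext p
      simp [F1.equivRT, F1.toRT, coordG1, F1.toG1, apply_pathOf hN hInf]
    refine continuous_induced_rng.2 ?_
    rw [hcomp]
    exact @Continuous.comp _ _ _ _ (G1Top _ _) (.coinduced (coordG1 Ψ) (G1Top _ _)) _ _
      continuous_coinduced_rng F1.continuous_toG1
  · exact continuous_induced_coinduced_of_comp (π := coordG1 Ψ)
      (A := {v | (v.2.1, v.2.2) ∈ RT}) (coordG1_mem_RT hN hInf) (continuous_ofRT_coordG1 hN hInf)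
  · intro k0 k1 k0' k1' m1 h1 _
    rw [add_comm k0, addZE_add h1.1]
end

section
/- Let n ≥ 1, let 𝔉̃_n¹ := {(k_0,k,m) ∈ ℤ × ℤⁿ × ℕ̄ⁿ : k + m ∈ ℕ̄ⁿ, and if i_1 := ε(m) ≤ n then k_0 + Σ_{i=1}^{i_1} k_i = 0 and k_j = 0 for all i_1 < j ≤ n}, and let R_∞ be the equivalence relation on ℕ̄ⁿ with (m,m') ∈ R_∞ iff ε(m) = ε(m') and m_i = m'_i for all i < ε(m). If (k_0,k,m) ∈ 𝔉̃_n¹ and (m, m') ∈ R_∞, then (k_0,k,m') ∈ 𝔉̃_n¹ and (k+m, k+m') ∈ R_∞. (Hence the equivalence relation identifying (k_0,k,m) with (k_0,k,m') whenever (m,m') ∈ R_∞ is compatible with the transformation-groupoid composition (k_0',k',k+m)·(k_0,k,m) = (k_0+k_0', k+k', m) on 𝔉̃_n¹.) -/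
/-- Membership in Sheu's groupoid `𝔉̃ₙ¹ ⊆ ℤ × ℤⁿ × ℕ̄ⁿ`: `k + m ∈ ℕ̄ⁿ` and, whenever the
(paper, `1`-based) anchor `ε(m) = anchor n m + 1` is `≤ n` (i.e. `anchor n m < n`),
`k₀ + ∑_{i=1}^{ε(m)} kᵢ = 0` and `k_j = 0` for all `ε(m) < j ≤ n`. -/
def sphCond (n : ℕ) (k0 : ℤ) (k : Fin n → ℤ) (m : Fin n → ℕ∞) : Prop :=
  okAdd k m ∧ (anchor n m < n →
    (k0 + ∑ i : Fin n, (if (i : ℕ) ≤ anchor n m then k i else 0) = 0) ∧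
    ∀ j : Fin n, anchor n m < (j : ℕ) → k j = 0)

lemma addZE_eq_top_iff (k : ℤ) (m : ℕ∞) : addZE k m = ⊤ ↔ m = ⊤ := by
  unfold addZE
  split <;> simp_all

lemma anchor_set_nonempty (n : ℕ) (m : Fin n → ℕ∞) :
    {i : ℕ | n ≤ i ∨ ∃ h : i < n, m ⟨i, h⟩ = ⊤}.Nonempty :=
  ⟨n, Or.inl le_rfl⟩

lemma anchor_mem (n : ℕ) (m : Fin n → ℕ∞) :
    n ≤ anchor n m ∨ ∃ h : anchor n m < n, m ⟨anchor n m, h⟩ = ⊤ :=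
  Nat.sInf_mem (anchor_set_nonempty n m)

lemma anchor_not_top (n : ℕ) (m : Fin n → ℕ∞) (i : Fin n) (hi : (i : ℕ) < anchor n m) :
    m i ≠ ⊤ := by
  have := Nat.notMem_of_lt_sInf (s := {i : ℕ | n ≤ i ∨ ∃ h : i < n, m ⟨i, h⟩ = ⊤}) hi
  simp only [Set.mem_setOf_eq, not_or, not_exists] at this
  have h2 := this.2 i.isLt
  simpa using h2

lemma anchor_addZv (n : ℕ) (k : Fin n → ℤ) (m : Fin n → ℕ∞) :
    anchor n (addZv k m) = anchor n m := by
  unfold anchor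
  congr 1
  ext i
  simp only [Set.mem_setOf_eq, addZv, addZE_eq_top_iff]

/-- For `n ≥ 1`: if `(k₀,k,m) ∈ 𝔉̃ₙ¹` and `(m,m') ∈ R_∞`, then
`(k₀,k,m') ∈ 𝔉̃ₙ¹` and `(k+m, k+m') ∈ R_∞` (so the relation identifying `(k₀,k,m)` with
`(k₀,k,m')` whenever `(m,m') ∈ R_∞` is compatible with the groupoid composition). -/
theorem stmt_15 (n : ℕ) (hn : 1 ≤ n)
    (k0 : ℤ) (k : Fin n → ℤ) (m m' : Fin n → ℕ∞)
    (hF : sphCond n k0 k m) (hR : Rinf n m m') :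
    sphCond n k0 k m' ∧ Rinf n (addZv k m) (addZv k m') := by
  obtain ⟨hok, hcond⟩ := hF
  obtain ⟨hanc, heq⟩ := hR
  have hok' : okAdd k m' := by
    intro i
    rcases lt_trichotomy (i : ℕ) (anchor n m) with h | h | h
    · rw [← heq i h]; exact hok i
    · -- i = anchor, anchor < n, so m' i = ⊤
      left
      rcases anchor_mem n m' with h1 | ⟨h2, h3⟩
      · omega
      · have : i = ⟨anchor n m', h2⟩ := by ext; simp only []; omega
        rw [this]; exact h3
    · -- i > anchor, anchor < n so k i = 0
      have hlt : anchor n m < n := lt_of_le_of_lt (Nat.le_of_lt h) i.isLt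
      have hk0 : k i = 0 := (hcond hlt).2 i h
      right
      rw [hk0]
      positivity
  have hanc' : anchor n m = anchor n m' := hanc
  refine ⟨⟨hok', ?_⟩, ?_, ?_⟩
  · rw [← hanc']; exact hcond
  · rw [anchor_addZv, anchor_addZv]; exact hanc
  · intro i hi
    rw [anchor_addZv] at hi
    simp only [addZv]
    rw [heq i hi]
end
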